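/- arXiv:1004.2909 — 2 statements merged into one kernel-verified Lean document; each statement's English description precedes it below -/
import Mathlib

section
/- Let G be the Kaluza-Klein metric on an open set of ℝ³ with G_{αβ} = h_{αβ} + ε φ_α φ_β, G_{α2} = ε φ_α, G_{22} = ε, where h and φ are independent of x². Then the Christoffel symbols of G with mixed base indices satisfy Γ^δ_{2β} = (ε/2) h^{δζ} f_{βζ}, where f_{αβ} := ∂_α φ_β − ∂_β φ_α and h^{δζ} denotes the inverse of h. -/
open Matrix

/-- Partial derivative in coordinate direction `μ` on ℝ³. -/
noncomputable def pd (μ : Fin 3) (F : (Fin 3 → ℝ) → ℝ) (x : Fin 3 → ℝ) : ℝ :=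
  fderiv ℝ F x (Pi.single μ 1)

/-- The Kaluza-Klein metric `G` with `G_{αβ} = h_{αβ} + ε φ_α φ_β`,
`G_{α2} = G_{2α} = ε φ_α`, `G_{22} = ε`. -/
noncomputable def KK (ε : ℝ) (h : Matrix (Fin 2) (Fin 2) ℝ) (φ : Fin 2 → ℝ) :
    Matrix (Fin 3) (Fin 3) ℝ :=
  Matrix.of fun μ ν =>
    if hμ : (μ : ℕ) < 2 then
      if hν : (ν : ℕ) < 2 then h ⟨(μ : ℕ), hμ⟩ ⟨(ν : ℕ), hν⟩ + ε * φ ⟨(μ : ℕ), hμ⟩ * φ ⟨(ν : ℕ), hν⟩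
      else ε * φ ⟨(μ : ℕ), hμ⟩
    else if hν : (ν : ℕ) < 2 then ε * φ ⟨(ν : ℕ), hν⟩ else ε

/-- Christoffel symbols `Γ^λ_{μν} = (1/2) G^{λρ}(∂_ν G_{ρμ} + ∂_μ G_{ρν} − ∂_ρ G_{μν})`. -/
noncomputable def chris (G : (Fin 3 → ℝ) → Matrix (Fin 3) (Fin 3) ℝ)
    (x : Fin 3 → ℝ) (l μ ν : Fin 3) : ℝ :=
  (1/2) * ∑ ρ, (G x)⁻¹ l ρ *
    (pd ν (fun y => G y ρ μ) x + pd μ (fun y => G y ρ ν) x - pd ρ (fun y => G y μ ν) x)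

/-- Abelian field strength `f_{αβ} = ∂_α φ_β − ∂_β φ_α` (base indices). -/
noncomputable def fs (φf : (Fin 3 → ℝ) → Fin 2 → ℝ) (x : Fin 3 → ℝ) (α β : Fin 2) : ℝ :=
  pd α.castSucc (fun y => φf y β) x - pd β.castSucc (fun y => φf y α) x

/-- Christoffel symbols `γ^δ_{αβ}` of the base metric `h`. -/
noncomputable def gam (hm : (Fin 3 → ℝ) → Matrix (Fin 2) (Fin 2) ℝ)
    (x : Fin 3 → ℝ) (δ α β : Fin 2) : ℝ :=
  (1/2) * ∑ ζ, (hm x)⁻¹ δ ζ *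
    (pd β.castSucc (fun y => hm y ζ α) x + pd α.castSucc (fun y => hm y ζ β) x
      - pd ζ.castSucc (fun y => hm y α β) x)

/-! Since `h` and `φ` do not depend on `x²`, every `∂₂ G_{μν}` vanishes, so
`Γ^δ_{2β} = ½ G^{δρ} (∂_β G_{ρ2} − ∂_ρ G_{2β})`. The `ρ = 2` term drops out because `G_{22} = ε`
is constant and `G_{2β} = ε φ_β` does not depend on `x²`. The block inverse of the Kaluza–Klein
metric has `G^{δζ} = h^{δζ}`, and for `ρ = ζ` the bracket is
`ε (∂_β φ_ζ − ∂_ζ φ_β) = ε f_{βζ}`. -/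

theorem fderiv_apply_single_eq_zero_of_update_eq {ι : Type*} [Fintype ι] [DecidableEq ι]
    {F : (ι → ℝ) → ℝ} {x : ι → ℝ} (i : ι) (hF : DifferentiableAt ℝ F x)
    (hconst : ∀ t, F (Function.update x i t) = F x) :
    fderiv ℝ F x (Pi.single i 1) = 0 := by
  have hline := hF.hasFDerivAt.comp_hasDerivAt_of_eq (x i) (hasDerivAt_update x i (x i))
    (Function.update_eq_self i x).symm
  rw [show F ∘ Function.update x i = fun _ => F x from funext hconst] at hline
  exact hline.unique (hasDerivAt_const _ _)

section KK

variable {ε : ℝ} {H : Matrix (Fin 2) (Fin 2) ℝ} {φ : Fin 2 → ℝ}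

@[simp] theorem KK_castSucc_castSucc (α β : Fin 2) :
    KK ε H φ α.castSucc β.castSucc = H α β + ε * φ α * φ β := by
  simp [KK, Fin.is_le]

@[simp] theorem KK_castSucc_two (α : Fin 2) : KK ε H φ α.castSucc 2 = ε * φ α := by
  simp [KK, Fin.is_le]

@[simp] theorem KK_two_castSucc (β : Fin 2) : KK ε H φ 2 β.castSucc = ε * φ β := by
  simp [KK, Fin.is_le]

@[simp] theorem KK_two_two : KK ε H φ 2 2 = ε := by
  simp [KK]

end KK

-- The block (Schur complement) inverse of `KK ε h φ`, with `k` standing for `h⁻¹`.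
noncomputable def kkInv (ε : ℝ) (k : Matrix (Fin 2) (Fin 2) ℝ) (φ : Fin 2 → ℝ) :
    Matrix (Fin 3) (Fin 3) ℝ :=
  Matrix.of fun μ ν =>
    Fin.lastCases (Fin.lastCases (ε⁻¹ + φ ⬝ᵥ (k *ᵥ φ)) (fun β => -(φ ᵥ* k) β) ν)
      (fun α => Fin.lastCases (-(k *ᵥ φ) α) (fun β => k α β) ν) μ

section kkInv

variable {ε : ℝ} {k : Matrix (Fin 2) (Fin 2) ℝ} {φ : Fin 2 → ℝ}

@[simp] theorem kkInv_castSucc_castSucc (α β : Fin 2) :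
    kkInv ε k φ α.castSucc β.castSucc = k α β := by
  simp [kkInv]

@[simp] theorem kkInv_castSucc_two (α : Fin 2) :
    kkInv ε k φ α.castSucc 2 = -(k *ᵥ φ) α := by
  rw [show (2 : Fin 3) = Fin.last 2 from rfl]
  simp only [kkInv, Matrix.of_apply, Fin.lastCases_last, Fin.lastCases_castSucc]

@[simp] theorem kkInv_two_castSucc (β : Fin 2) :
    kkInv ε k φ 2 β.castSucc = -(φ ᵥ* k) β := by
  rw [show (2 : Fin 3) = Fin.last 2 from rfl]
  simp only [kkInv, Matrix.of_apply, Fin.lastCases_last, Fin.lastCases_castSucc]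

@[simp] theorem kkInv_two_two : kkInv ε k φ 2 2 = ε⁻¹ + φ ⬝ᵥ (k *ᵥ φ) := by
  rw [show (2 : Fin 3) = Fin.last 2 from rfl]
  simp only [kkInv, Matrix.of_apply, Fin.lastCases_last]

end kkInv

theorem KK_mul_kkInv {ε : ℝ} (hε : ε ≠ 0) {H : Matrix (Fin 2) (Fin 2) ℝ}
    (hH : IsUnit H.det) (φ : Fin 2 → ℝ) : KK ε H φ * kkInv ε H⁻¹ φ = 1 := by
  have hHk : H * H⁻¹ = 1 := Matrix.mul_nonsing_inv H hH
  have hHkφ : H *ᵥ (H⁻¹ *ᵥ φ) = φ := by rw [Matrix.mulVec_mulVec, hHk, Matrix.one_mulVec]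
  have hεε : ε * ε⁻¹ = 1 := mul_inv_cancel₀ hε
  have hne (α : Fin 2) : α.castSucc ≠ 2 := Fin.castSucc_ne_last α
  ext μ ν
  induction μ using Fin.lastCases with
  | cast α =>
    induction ν using Fin.lastCases with
    | cast β =>
      have e := congrFun (congrFun hHk α) β
      simp only [Matrix.mul_apply, Matrix.one_apply, Fin.sum_univ_two] at e
      simp [Matrix.mul_apply, Matrix.one_apply, Fin.sum_univ_castSucc, Matrix.vecMul,
        dotProduct]
      linear_combination e
    | last =>
      have e := congrFun hHkφ α
      simp only [Matrix.mulVec, dotProduct, Fin.sum_univ_two] at e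
      simp [Matrix.mul_apply, Fin.sum_univ_castSucc, Matrix.mulVec, dotProduct, hne]
      linear_combination -e + φ α * hεε
  | last =>
    induction ν using Fin.lastCases with
    | cast β =>
      simp [Matrix.mul_apply, Fin.sum_univ_castSucc, Matrix.vecMul, dotProduct, (hne β).symm]
      ring
    | last =>
      simp [Matrix.mul_apply, Fin.sum_univ_castSucc, Matrix.mulVec, dotProduct]
      linear_combination hεε

theorem inv_KK {ε : ℝ} (hε : ε ≠ 0) {H : Matrix (Fin 2) (Fin 2) ℝ} (hH : IsUnit H.det)
    (φ : Fin 2 → ℝ) : (KK ε H φ)⁻¹ = kkInv ε H⁻¹ φ :=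
  Matrix.inv_eq_right_inv (KK_mul_kkInv hε hH φ)

theorem differentiable_KK_apply {E : Type*} [NormedAddCommGroup E] [NormedSpace ℝ E] (ε : ℝ)
    {hm : E → Matrix (Fin 2) (Fin 2) ℝ} {φf : E → Fin 2 → ℝ}
    (hh : ∀ α β, Differentiable ℝ fun x => hm x α β)
    (hφ : ∀ α, Differentiable ℝ fun x => φf x α)
    (μ ν : Fin 3) : Differentiable ℝ fun x => KK ε (hm x) (φf x) μ ν := by
  simp only [KK, Matrix.of_apply]
  split_ifs <;> fun_prop

theorem pd_const_mul (μ : Fin 3) (c : ℝ) {F : (Fin 3 → ℝ) → ℝ} {x : Fin 3 → ℝ}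
    (hF : DifferentiableAt ℝ F x) : pd μ (fun y => c * F y) x = c * pd μ F x := by
  simp [pd, fderiv_const_mul hF]

theorem pd_const (μ : Fin 3) (c : ℝ) (x : Fin 3 → ℝ) : pd μ (fun _ => c) x = 0 := by
  simp [pd]

/-- For the Kaluza-Klein metric (with h, φ independent of x²),
the mixed Christoffel symbols satisfy Γ^δ_{2β} = (ε/2) h^{δζ} f_{βζ}. -/
theorem stmt_2
    (ε : ℝ) (hε : 0 < ε)
    (hm : (Fin 3 → ℝ) → Matrix (Fin 2) (Fin 2) ℝ) (φf : (Fin 3 → ℝ) → Fin 2 → ℝ)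
    (hsm : ∀ α β, ContDiff ℝ (⊤ : ℕ∞) fun x => hm x α β)
    (φsm : ∀ α, ContDiff ℝ (⊤ : ℕ∞) fun x => φf x α)
    (hinv : ∀ x, IsUnit (hm x).det)
    (hind : ∀ x t, hm (Function.update x 2 t) = hm x)
    (φind : ∀ x t, φf (Function.update x 2 t) = φf x) :
    ∀ (x : Fin 3 → ℝ) (δ β : Fin 2),
      chris (fun y => KK ε (hm y) (φf y)) x δ.castSucc 2 β.castSucc =
        (ε / 2) * ∑ ζ, (hm x)⁻¹ δ ζ * fs φf x β ζ := by
  intro x δ β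
  have hφ (α : Fin 2) : Differentiable ℝ fun y => φf y α := (φsm α).differentiable (by simp)
  have hh (α β : Fin 2) : Differentiable ℝ fun y => hm y α β :=
    (hsm α β).differentiable (by simp)
  have hpd_two (μ ν : Fin 3) : pd 2 (fun y => KK ε (hm y) (φf y) μ ν) x = 0 :=
    fderiv_apply_single_eq_zero_of_update_eq 2 (differentiable_KK_apply ε hh hφ μ ν x)
      fun t => by simp only [hind, φind]
  have hpd_φ (μ : Fin 3) (α : Fin 2) :
      pd μ (fun y => ε * φf y α) x = ε * pd μ (fun y => φf y α) x :=
    pd_const_mul μ ε (hφ α x)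
  have hφ_two (α : Fin 2) : pd 2 (fun y => φf y α) x = 0 :=
    fderiv_apply_single_eq_zero_of_update_eq 2 (hφ α x) fun t => by rw [φind]
  rw [chris, Fin.sum_univ_castSucc, show Fin.last 2 = 2 from rfl]
  simp only [hpd_two, inv_KK hε.ne' (hinv x), kkInv_castSucc_castSucc, KK_castSucc_two,
    KK_two_castSucc, KK_two_two, hpd_φ, hφ_two, pd_const, fs, Finset.mul_sum, add_zero, sub_zero,
    mul_zero]
  exact Finset.sum_congr rfl fun ζ _ => by ring
end

section
/- Under the Kaluza-Klein hypotheses with the standard Vielbein choice, the fiber-direction spin connection components vanish: [A_2]^a_2 = 0 for a ∈ {0,1}, where [A_μ]^A_B := E^A_ν Ẽ^λ_B Γ^ν_{μλ} − Ẽ^λ_B ∂_μ E^A_λ. -/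
open Matrix

/-- The Vielbein `E^A_μ` (row index A, column index μ):
`E^a_α = e^a_α`, `E^2_2 = √ε`, `E^2_α = √ε φ_α`, `E^a_2 = 0`. -/
noncomputable def Emat (ε : ℝ) (e : Matrix (Fin 2) (Fin 2) ℝ) (φ : Fin 2 → ℝ) :
    Matrix (Fin 3) (Fin 3) ℝ :=
  !![e 0 0, e 0 1, 0;
     e 1 0, e 1 1, 0;
     Real.sqrt ε * φ 0, Real.sqrt ε * φ 1, Real.sqrt ε]

/-- The inverse Vielbein `Ẽ^μ_A` (row index μ, column index A):
`Ẽ^α_a = ẽ^α_a`, `Ẽ^2_2 = 1/√ε`, `Ẽ^2_a = −φ_ζ ẽ^ζ_a`, `Ẽ^α_2 = 0`. -/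
noncomputable def Etmat (ε : ℝ) (e : Matrix (Fin 2) (Fin 2) ℝ) (φ : Fin 2 → ℝ) :
    Matrix (Fin 3) (Fin 3) ℝ :=
  !![e⁻¹ 0 0, e⁻¹ 0 1, 0;
     e⁻¹ 1 0, e⁻¹ 1 1, 0;
     -(φ 0 * e⁻¹ 0 0 + φ 1 * e⁻¹ 1 0), -(φ 0 * e⁻¹ 0 1 + φ 1 * e⁻¹ 1 1),
       (Real.sqrt ε)⁻¹]

/-- The spin connection `[A_μ]^A_B = E^A_ν Ẽ^λ_B Γ^ν_{μλ} − Ẽ^λ_B ∂_μ E^A_λ`. -/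
noncomputable def spinConn (ε : ℝ) (hm : (Fin 3 → ℝ) → Matrix (Fin 2) (Fin 2) ℝ)
    (φf : (Fin 3 → ℝ) → Fin 2 → ℝ) (em : (Fin 3 → ℝ) → Matrix (Fin 2) (Fin 2) ℝ)
    (μ A B : Fin 3) (x : Fin 3 → ℝ) : ℝ :=
  (∑ ν, ∑ lam, Emat ε (em x) (φf x) A ν * Etmat ε (em x) (φf x) lam B *
      chris (fun y => KK ε (hm y) (φf y)) x ν μ lam)
    - ∑ lam, Etmat ε (em x) (φf x) lam B * pd μ (fun y => Emat ε (em y) (φf y) A lam) x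

/-! Only `λ = 2` contributes to `[A_2]^a_2`, since `Ẽ^α_2 = 0`. Its first term is a multiple of
`Γ^ν_{22} = ½ G^{νρ} (2 ∂_2 G_{ρ2} − ∂_ρ G_{22})`, which vanishes because `G_{ρ2}` does not depend on
`x²` and `G_{22} = ε` is constant; its second term is `∂_2 E^a_2 = ∂_2 0`. -/

theorem fderiv_apply_eq_zero_of_forall_add_smul {𝕜 E F : Type*} [NontriviallyNormedField 𝕜]
    [NormedAddCommGroup E] [NormedSpace 𝕜 E] [NormedAddCommGroup F] [NormedSpace 𝕜 F]
    {f : E → F} {x v : E} (hf : ∀ t : 𝕜, f (x + t • v) = f x) :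
    fderiv 𝕜 f x v = 0 := by
  by_cases hdiff : DifferentiableAt 𝕜 f x
  · rw [← hdiff.lineDeriv_eq_fderiv, lineDeriv, funext hf, deriv_const]
  · rw [fderiv_zero_of_not_differentiableAt hdiff, _root_.zero_apply]

theorem add_smul_single_one_eq_update {ι : Type*} [DecidableEq ι] (x : ι → ℝ) (i : ι) (t : ℝ) :
    x + t • Pi.single i 1 = Function.update x i (x i + t) := by
  ext j
  rcases eq_or_ne j i with rfl | hj
  · simp
  · simp [hj]

theorem pd_eq_zero_of_update_invariant {μ : Fin 3} {F : (Fin 3 → ℝ) → ℝ} {x : Fin 3 → ℝ}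
    (hF : ∀ t, F (Function.update x μ t) = F x) : pd μ F x = 0 :=
  fderiv_apply_eq_zero_of_forall_add_smul fun t => by
    rw [add_smul_single_one_eq_update, hF]

theorem chris_eq_zero_of_pd_eq_zero {G : (Fin 3 → ℝ) → Matrix (Fin 3) (Fin 3) ℝ} {x : Fin 3 → ℝ}
    {μ : Fin 3} (hcol : ∀ ρ, pd μ (fun y => G y ρ μ) x = 0)
    (hdiag : ∀ ρ, pd ρ (fun y => G y μ μ) x = 0) (ν : Fin 3) :
    chris G x ν μ μ = 0 := by
  simp [chris, hcol, hdiag]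

theorem KK_apply_two (ε : ℝ) (h : Matrix (Fin 2) (Fin 2) ℝ) (φ : Fin 2 → ℝ) (ρ : Fin 3) :
    KK ε h φ ρ 2 = ε * Fin.snoc (α := fun _ => ℝ) φ 1 ρ := by
  fin_cases ρ <;> simp [KK, Fin.snoc]

theorem KK_apply_two_two (ε : ℝ) (h : Matrix (Fin 2) (Fin 2) ℝ) (φ : Fin 2 → ℝ) :
    KK ε h φ 2 2 = ε := by
  simp [KK]

theorem chris_KK_two_two (ε : ℝ) (hm : (Fin 3 → ℝ) → Matrix (Fin 2) (Fin 2) ℝ)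
    {φf : (Fin 3 → ℝ) → Fin 2 → ℝ} (φind : ∀ x t, φf (Function.update x 2 t) = φf x)
    (x : Fin 3 → ℝ) (ν : Fin 3) :
    chris (fun y => KK ε (hm y) (φf y)) x ν 2 2 = 0 := by
  refine chris_eq_zero_of_pd_eq_zero (fun ρ => ?_) (fun ρ => ?_) ν
  · exact pd_eq_zero_of_update_invariant fun t => by simp only [KK_apply_two, φind]
  · simpa [KK_apply_two_two] using pd_const ρ ε x

theorem Etmat_apply_two (ε : ℝ) (e : Matrix (Fin 2) (Fin 2) ℝ) (φ : Fin 2 → ℝ) (lam : Fin 3) :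
    Etmat ε e φ lam 2 = if lam = 2 then (√ε)⁻¹ else 0 := by
  fin_cases lam <;> simp [Etmat]

theorem spinConn_apply_two (ε : ℝ) (hm : (Fin 3 → ℝ) → Matrix (Fin 2) (Fin 2) ℝ)
    (φf : (Fin 3 → ℝ) → Fin 2 → ℝ) (em : (Fin 3 → ℝ) → Matrix (Fin 2) (Fin 2) ℝ)
    (μ A : Fin 3) (x : Fin 3 → ℝ) :
    spinConn ε hm φf em μ A 2 x = (√ε)⁻¹ * ((∑ ν, Emat ε (em x) (φf x) A ν *
        chris (fun y => KK ε (hm y) (φf y)) x ν μ 2) - pd μ (fun y => Emat ε (em y) (φf y) A 2) x) := by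
  simp [spinConn, Etmat_apply_two, mul_sub, Finset.mul_sum, mul_left_comm, mul_assoc]

theorem Emat_castSucc_two (ε : ℝ) (e : Matrix (Fin 2) (Fin 2) ℝ) (φ : Fin 2 → ℝ) (a : Fin 2) :
    Emat ε e φ a.castSucc 2 = 0 := by
  fin_cases a <;> simp [Emat]

theorem stmt_16_general
    (ε : ℝ)
    (hm : (Fin 3 → ℝ) → Matrix (Fin 2) (Fin 2) ℝ) (φf : (Fin 3 → ℝ) → Fin 2 → ℝ)
    (φind : ∀ x t, φf (Function.update x 2 t) = φf x)
    (em : (Fin 3 → ℝ) → Matrix (Fin 2) (Fin 2) ℝ) :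
    ∀ (x : Fin 3 → ℝ) (a : Fin 2),
      spinConn ε hm φf em 2 a.castSucc 2 x = 0 := by
  intro x a
  simp [spinConn_apply_two, chris_KK_two_two ε hm φind, Emat_castSucc_two, pd_const]

/-- the fiber-direction spin connection components vanish:
[A_2]^a_2 = 0 for a ∈ {0,1}. -/
theorem stmt_16
    (ε : ℝ) (hε : 0 < ε)
    (hm : (Fin 3 → ℝ) → Matrix (Fin 2) (Fin 2) ℝ) (φf : (Fin 3 → ℝ) → Fin 2 → ℝ)
    (hsm : ∀ α β, ContDiff ℝ (⊤ : ℕ∞) fun x => hm x α β)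
    (φsm : ∀ α, ContDiff ℝ (⊤ : ℕ∞) fun x => φf x α)
    (hinv : ∀ x, IsUnit (hm x).det)
    (hind : ∀ x t, hm (Function.update x 2 t) = hm x)
    (φind : ∀ x t, φf (Function.update x 2 t) = φf x)
    (em : (Fin 3 → ℝ) → Matrix (Fin 2) (Fin 2) ℝ)
    (esm : ∀ a α, ContDiff ℝ (⊤ : ℕ∞) fun x => em x a α)
    (einv : ∀ x, IsUnit (em x).det)
    (hZwei : ∀ x, (em x)ᵀ * em x = hm x) :
    ∀ (x : Fin 3 → ℝ) (a : Fin 2),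
      spinConn ε hm φf em 2 a.castSucc 2 x = 0 :=
  stmt_16_general ε hm φf φind em
end
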